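/- Let D be a Prüfer domain whose prime spectrum is a Noetherian topological space. Then the Zariski space Zar(D) is a Noetherian topological space; indeed, the center map gamma : Zar(D) -> Spec(D), V ↦ m_V ∩ D, is a homeomorphism. -/

import Mathlib

/-- The Zariski topology on the set of valuation subrings of a field `K`. -/
instance zariskiTopology (K : Type*) [Field K] : TopologicalSpace (ValuationSubring K) :=
  TopologicalSpace.generateFrom {U | ∃ x : K, U = {V : ValuationSubring K | x ∈ V}}

/-- The Zariski space `Zar(D)`: valuation subrings of `K` containing the image of `D`. -/
def zarSet (D K : Type*) [CommRing D] [Field K] [Algebra D K] : Set (ValuationSubring K) :=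
  {V | ∀ d : D, algebraMap D K d ∈ V}


/-- The localization `D_P` at a prime `P`, as a subalgebra of the fraction field `K`. -/
noncomputable def locAt (D K : Type*) [CommRing D] [IsDomain D] [Field K] [Algebra D K]
    [IsFractionRing D K] (P : Ideal D) (hP : P.IsPrime) : Subalgebra D K :=
  Localization.subalgebra K (@Ideal.primeCompl D _ P hP)
    (@Ideal.primeCompl_le_nonZeroDivisors D _ _ P hP)

/-!
The inverse of the center map is `P ↦ D_P`. The center of `D_P` is `P`, and if `V` has center
`P` then `D_P ⊆ V`. Every element of `D_P` that is a unit of `V` is already a unit of `D_P`; since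
`D_P` is a valuation ring, this domination forces `V ⊆ D_P`. Both maps are continuous: the
preimage of `D(f)` is `{V | f⁻¹ ∈ V}` for `f ≠ 0`, and `x ∈ D_P` exactly when `P` lies in some
`D(s)` with `x s ∈ D`.
-/

open TopologicalSpace

theorem ValuationSubring.le_of_inv_mem {K : Type*} [Field K] {V W : ValuationSubring K}
    (h : ∀ x ∈ W, x⁻¹ ∈ V → x⁻¹ ∈ W) : V ≤ W := by
  intro x hxV
  refine (W.mem_or_inv_mem x).elim id fun hx => ?_
  simpa using h x⁻¹ hx (by simpa using hxV)

theorem ValuationSubring.isOpen_setOf_mem {K : Type*} [Field K] (x : K) :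
    IsOpen {V : ValuationSubring K | x ∈ V} :=
  isOpen_generateFrom_of_mem ⟨x, rfl⟩

theorem IsFractionRing.algebraMap_ne_zero_of_notMem {R K : Type*} [CommRing R] [CommRing K]
    [Algebra R K] [IsFractionRing R K] {P : Ideal R} {s : R} (hs : s ∉ P) :
    algebraMap R K s ≠ 0 :=
  (map_ne_zero_iff _ (IsFractionRing.injective R K)).2 fun h => hs (h ▸ P.zero_mem)

section Center

variable {D K : Type*} [CommRing D] [Field K] [Algebra D K]

def zarCenter (V : zarSet D K) : PrimeSpectrum D :=
  ⟨(IsLocalRing.maximalIdeal (V : ValuationSubring K)).comap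
      ((algebraMap D K).codRestrict (V : ValuationSubring K) V.2), inferInstance⟩

theorem notMem_zarCenter_iff {V : zarSet D K} {d : D} :
    d ∉ (zarCenter V).asIdeal ↔
      algebraMap D K d ≠ 0 ∧ (algebraMap D K d)⁻¹ ∈ (V : ValuationSubring K) := by
  rw [← not_iff_not, not_not, not_and_or, not_ne_iff, ← ValuationSubring.mem_nonunits_iff_or]
  exact ValuationSubring.coe_mem_nonunits_iff.symm

theorem continuous_zarCenter : Continuous (zarCenter : zarSet D K → PrimeSpectrum D) := by
  rw [PrimeSpectrum.isTopologicalBasis_basic_opens.continuous_iff]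
  rintro _ ⟨f, rfl⟩
  have hpre : zarCenter ⁻¹' (PrimeSpectrum.basicOpen f : Set (PrimeSpectrum D)) =
      {V : zarSet D K | algebraMap D K f ≠ 0 ∧ (algebraMap D K f)⁻¹ ∈ (V : ValuationSubring K)} :=
    Set.ext fun _ => notMem_zarCenter_iff
  rw [hpre]
  by_cases hf : algebraMap D K f = 0
  · simp [hf]
  · simpa [hf] using (ValuationSubring.isOpen_setOf_mem _).preimage continuous_subtype_val

end Center

section Prufer

variable {D K : Type*} [CommRing D] [IsDomain D] [Field K] [Algebra D K] [IsFractionRing D K]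

theorem mem_locAt_iff {P : Ideal D} {hP : P.IsPrime} {x : K} :
    x ∈ locAt D K P hP ↔ ∃ a s : D, s ∉ P ∧ x = algebraMap D K a * (algebraMap D K s)⁻¹ := by
  rw [locAt, ← Localization.subalgebra.ofField_eq]
  exact ⟨fun ⟨a, s, hs, h⟩ => ⟨a, s, hs, h⟩, fun ⟨a, s, hs, h⟩ => ⟨a, s, hs, h⟩⟩

theorem mem_of_mem_locAt_zarCenter {V : zarSet D K} {x : K}
    (hx : x ∈ locAt D K (zarCenter V).asIdeal (zarCenter V).2) : x ∈ (V : ValuationSubring K) := by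
  obtain ⟨a, s, hs, rfl⟩ := mem_locAt_iff.1 hx
  exact mul_mem (V.2 a) (notMem_zarCenter_iff.1 hs).2

theorem inv_mem_locAt_zarCenter {V : zarSet D K} {x : K}
    (hx : x ∈ locAt D K (zarCenter V).asIdeal (zarCenter V).2)
    (hxV : x⁻¹ ∈ (V : ValuationSubring K)) :
    x⁻¹ ∈ locAt D K (zarCenter V).asIdeal (zarCenter V).2 := by
  obtain ⟨a, s, hs, rfl⟩ := mem_locAt_iff.1 hx
  obtain ⟨hs0, hsV⟩ := notMem_zarCenter_iff.1 hs
  by_cases ha0 : algebraMap D K a = 0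
  · simp [ha0]
  have ha : a ∉ (zarCenter V).asIdeal := by
    refine notMem_zarCenter_iff.2 ⟨ha0, ?_⟩
    have hinv : (algebraMap D K a)⁻¹ = (algebraMap D K a * (algebraMap D K s)⁻¹)⁻¹ *
        (algebraMap D K s)⁻¹ := by
      field_simp
    exact hinv ▸ mul_mem hxV hsV
  exact mem_locAt_iff.2 ⟨s, a, ha, by rw [mul_inv, inv_inv, mul_comm]⟩

variable (hpruf : ∀ (P : Ideal D) (hP : P.IsPrime) (x : K),
  x ∈ locAt D K P hP ∨ x⁻¹ ∈ locAt D K P hP)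

noncomputable def zarLoc (P : PrimeSpectrum D) : zarSet D K :=
  ⟨{ toSubring := (locAt D K P.asIdeal P.2).toSubring
     mem_or_inv_mem' := hpruf P.asIdeal P.2 },
   fun d => Subalgebra.algebraMap_mem _ d⟩

theorem zarCenter_zarLoc (P : PrimeSpectrum D) : zarCenter (zarLoc hpruf P) = P := by
  ext d
  rw [← not_iff_not, notMem_zarCenter_iff]
  change _ ∧ _ ∈ locAt D K P.asIdeal P.2 ↔ _
  rw [mem_locAt_iff]
  constructor
  · rintro ⟨hd0, a, s, hs, hinv⟩ hd
    have hs0 : algebraMap D K s ≠ 0 := IsFractionRing.algebraMap_ne_zero_of_notMem hs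
    have hsda : s = d * a := IsFractionRing.injective D K <| by
      rw [map_mul]
      field_simp at hinv
      linear_combination hinv
    exact hs (hsda ▸ P.asIdeal.mul_mem_right a hd)
  · intro hd
    exact ⟨IsFractionRing.algebraMap_ne_zero_of_notMem hd, 1, d, hd, by rw [map_one, one_mul]⟩

theorem zarLoc_zarCenter (V : zarSet D K) : zarLoc hpruf (zarCenter V) = V :=
  Subtype.ext <| le_antisymm (fun _ => mem_of_mem_locAt_zarCenter)
    (ValuationSubring.le_of_inv_mem fun _ => inv_mem_locAt_zarCenter)

theorem continuous_zarLoc : Continuous (zarLoc hpruf : PrimeSpectrum D → zarSet D K) := by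
  refine Continuous.subtype_mk (continuous_generateFrom_iff.2 ?_) _
  rintro _ ⟨x, rfl⟩
  have hpre : (fun P => (zarLoc hpruf P : ValuationSubring K)) ⁻¹' {V | x ∈ V} =
      ⋃ (a : D) (s : D) (_ : x = algebraMap D K a * (algebraMap D K s)⁻¹),
        (PrimeSpectrum.basicOpen s : Set (PrimeSpectrum D)) := by
    ext P
    simp only [Set.mem_preimage, Set.mem_ofPred_eq, Set.mem_iUnion, SetLike.mem_coe,
      PrimeSpectrum.mem_basicOpen, exists_prop]
    change x ∈ locAt D K P.asIdeal P.2 ↔ _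
    rw [mem_locAt_iff]
    exact exists_congr fun _ => exists_congr fun _ => and_comm
  exact hpre ▸ isOpen_iUnion fun _ => isOpen_iUnion fun _ => isOpen_iUnion fun _ =>
    (PrimeSpectrum.basicOpen _).isOpen

noncomputable def zarCenterHomeomorph : zarSet D K ≃ₜ PrimeSpectrum D where
  toFun := zarCenter
  invFun := zarLoc hpruf
  left_inv := zarLoc_zarCenter hpruf
  right_inv := zarCenter_zarLoc hpruf
  continuous_toFun := continuous_zarCenter
  continuous_invFun := continuous_zarLoc hpruf

end Prufer

theorem stmt15 (D K : Type*) [CommRing D] [IsDomain D] [Field K] [Algebra D K]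
    [IsFractionRing D K]
    -- `D` is a Prüfer domain: every localization at a prime is a valuation ring of `K`
    (hpruf : ∀ (P : Ideal D) (hP : P.IsPrime) (x : K),
      x ∈ locAt D K P hP ∨ x⁻¹ ∈ locAt D K P hP)
    (hnoeth : TopologicalSpace.NoetherianSpace (PrimeSpectrum D)) :
    TopologicalSpace.NoetherianSpace (zarSet D K) ∧
      ∃ h : zarSet D K ≃ₜ PrimeSpectrum D,
        ∀ V : zarSet D K, (h V).asIdeal =
          (IsLocalRing.maximalIdeal (V : ValuationSubring K)).comap
            ((algebraMap D K).codRestrict (V : ValuationSubring K) V.2) :=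
  ⟨(noetherianSpace_iff_of_homeomorph (zarCenterHomeomorph hpruf)).2 hnoeth,
    zarCenterHomeomorph hpruf, fun _ => rfl⟩
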